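/- Let α > −1 and n ∈ ℕ. The Laguerre kernel reproduces polynomials of degree at most n: for every real polynomial p with deg p ≤ n and every y ∈ ℝ, ∫_0^∞ K_n^α(x, y) p(x) x^α e^{−x} dx = p(y). -/

import Mathlib

open Polynomial Finset MeasureTheory Real

/-- The generalized Laguerre polynomial
`L_n^α(x) = Σ_{k=0}^n (−1)^k ((α+k+1)_{n−k} / ((n−k)!·k!)) x^k`. -/
noncomputable def laguerre (α : ℝ) (n : ℕ) : Polynomial ℝ :=
  ∑ k ∈ Finset.range (n + 1),
    Polynomial.C ((-1 : ℝ) ^ k * (ascPochhammer ℝ (n - k)).eval (α + k + 1) /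
      ((n - k).factorial * k.factorial)) * Polynomial.X ^ k


/-- The `n`-th Laguerre reproducing kernel
`K_n^α(x,y) = Σ_{k=0}^n (k!/Γ(α+k+1)) L_k^α(x) L_k^α(y)`. -/
noncomputable def laguerreKernel (α : ℝ) (n : ℕ) (x y : ℝ) : ℝ :=
  ∑ k ∈ Finset.range (n + 1),
    (k.factorial : ℝ) / Real.Gamma (α + k + 1) * (laguerre α k).eval x * (laguerre α k).eval y

open Set

noncomputable def lcoef (α : ℝ) (n k : ℕ) : ℝ :=
  (-1 : ℝ) ^ k * (ascPochhammer ℝ (n - k)).eval (α + k + 1) /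
      ((n - k).factorial * k.factorial)


/-- Alternating binomial sum of powers. -/
lemma alt_sum_pow : ∀ (n : ℕ), ∀ m ≤ n,
    ∑ k ∈ range (n+1), (-1:ℝ)^k * (n.choose k : ℝ) * (k:ℝ)^m
      = if m = n then (-1:ℝ)^n * n.factorial else 0 := by
  intro n
  induction n with
  | zero => intro m hm; interval_cases m; simp
  | succ n ih =>
    intro m hm
    have key : ∑ k ∈ range (n+2), (-1:ℝ)^k * ((n+1).choose k : ℝ) * (k:ℝ)^m
        = ∑ k ∈ range (n+1), (-1:ℝ)^k * (n.choose k : ℝ) * ((k:ℝ)^m - ((k:ℝ)+1)^m) := by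
      rw [Finset.sum_range_succ' (fun k => (-1:ℝ)^k * ((n+1).choose k : ℝ) * (k:ℝ)^m) (n+1)]
      have h1 : ∀ j, ((n+1).choose (j+1) : ℝ) = (n.choose j : ℝ) + (n.choose (j+1) : ℝ) := by
        intro j; rw [Nat.choose_succ_succ]; push_cast; ring
      simp only [h1]
      have h2 : ∑ k ∈ range (n+1), (-1:ℝ)^k * (n.choose k : ℝ) * ((k:ℝ)^m - ((k:ℝ)+1)^m)
          = ∑ k ∈ range (n+1), (-1:ℝ)^k * (n.choose k : ℝ) * (k:ℝ)^m
            - ∑ k ∈ range (n+1), (-1:ℝ)^k * (n.choose k : ℝ) * ((k:ℝ)+1)^m := by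
        rw [← Finset.sum_sub_distrib]; congr 1; ext k; ring
      rw [h2, Finset.sum_range_succ' (fun k => (-1:ℝ)^k * (n.choose k : ℝ) * (k:ℝ)^m) n]
      have h3 : ∑ j ∈ range n, (-1:ℝ)^(j+1) * (n.choose (j+1) : ℝ) * (((j:ℕ):ℝ)+1)^m
          = ∑ j ∈ range (n+1), (-1:ℝ)^(j+1) * (n.choose (j+1) : ℝ) * (((j:ℕ):ℝ)+1)^m := by
        rw [Finset.sum_range_succ]; simp
      push_cast
      rw [h3]
      have h5 : ∑ x ∈ range (n+1), (-1:ℝ)^(x+1) * ((n.choose x : ℝ) + (n.choose (x+1) : ℝ)) * ((x:ℝ)+1)^m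
          = (∑ j ∈ range (n+1), (-1:ℝ)^(j+1) * (n.choose (j+1) : ℝ) * ((j:ℝ)+1)^m)
            - ∑ k ∈ range (n+1), (-1:ℝ)^k * (n.choose k : ℝ) * ((k:ℝ)+1)^m := by
        rw [← Finset.sum_sub_distrib]; exact Finset.sum_congr rfl fun x _ => by ring
      rw [h5]; simp only [Nat.choose_zero_right]; ring
    rw [key]
    have hbin : ∀ k : ℕ, ((k:ℝ)+1)^m = ∑ j ∈ range (m+1), (k:ℝ)^j * (m.choose j : ℝ) := by
      intro k
      rw [add_pow]; exact Finset.sum_congr rfl fun j _ => by simp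
    have expand : ∑ k ∈ range (n+1), (-1:ℝ)^k * (n.choose k : ℝ) * ((k:ℝ)^m - ((k:ℝ)+1)^m)
        = - ∑ j ∈ range m, (m.choose j : ℝ) *
            ∑ k ∈ range (n+1), (-1:ℝ)^k * (n.choose k : ℝ) * (k:ℝ)^j := by
      have : ∀ k : ℕ, (k:ℝ)^m - ((k:ℝ)+1)^m = - ∑ j ∈ range m, (k:ℝ)^j * (m.choose j : ℝ) := by
        intro k
        rw [hbin k, Finset.sum_range_succ]
        simp
      simp only [this]
      simp only [mul_neg, Finset.mul_sum, Finset.sum_neg_distrib]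
      congr 1
      rw [Finset.sum_comm]
      exact Finset.sum_congr rfl fun j _ => Finset.sum_congr rfl fun k _ => by ring
    rw [expand]
    by_cases hmn : m = n + 1
    · subst hmn
      rw [Finset.sum_range_succ]
      have z : ∀ j ∈ range n, ((n+1).choose j : ℝ) *
          ∑ k ∈ range (n+1), (-1:ℝ)^k * (n.choose k : ℝ) * (k:ℝ)^j = 0 := by
        intro j hj
        rw [ih j (le_of_lt (Finset.mem_range.mp hj))]
        simp [Nat.ne_of_lt (Finset.mem_range.mp hj)]
      rw [Finset.sum_eq_zero z, ih n le_rfl]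
      simp [Nat.choose_succ_self_right, Nat.factorial_succ]
      ring
    · have hmn' : m ≤ n := Nat.lt_succ_iff.mp (lt_of_le_of_ne hm hmn)
      have z : ∀ j ∈ range m, ((m).choose j : ℝ) *
          ∑ k ∈ range (n+1), (-1:ℝ)^k * (n.choose k : ℝ) * (k:ℝ)^j = 0 := by
        intro j hj
        have hj' := Finset.mem_range.mp hj
        rw [ih j (le_trans (le_of_lt hj') hmn')]
        simp [Nat.ne_of_lt (lt_of_lt_of_le hj' hmn')]
      rw [Finset.sum_eq_zero z]
      simp [hmn]

lemma alt_sum_eval (n : ℕ) (P : Polynomial ℝ) (h : P.natDegree ≤ n) :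
    ∑ k ∈ range (n+1), (-1:ℝ)^k * (n.choose k : ℝ) * P.eval (k:ℝ)
      = (-1:ℝ)^n * n.factorial * P.coeff n := by
  have hev : ∀ k : ℕ, P.eval (k:ℝ) = ∑ m ∈ range (n+1), P.coeff m * (k:ℝ)^m := by
    intro k
    exact P.eval_eq_sum_range' (Nat.lt_succ_of_le h) (k:ℝ)
  simp only [hev, Finset.mul_sum]
  rw [Finset.sum_comm]
  have : ∀ m ∈ range (n+1),
      ∑ k ∈ range (n+1), (-1:ℝ)^k * (n.choose k : ℝ) * (P.coeff m * (k:ℝ)^m)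
        = P.coeff m * (if m = n then (-1:ℝ)^n * n.factorial else 0) := by
    intro m hm
    rw [← alt_sum_pow n m (Nat.lt_succ_iff.mp (Finset.mem_range.mp hm)), Finset.mul_sum]
    exact Finset.sum_congr rfl fun k _ => by ring
  rw [Finset.sum_congr rfl this]
  rw [Finset.sum_eq_single n (fun m _ hmn => by simp [hmn]) (by simp)]
  simp [mul_comm]

lemma Gamma_ascPochhammer (s : ℝ) (hs : 0 < s) (j : ℕ) :
    Real.Gamma (s + j) = Real.Gamma s * (ascPochhammer ℝ j).eval s := by
  induction j with
  | zero => simp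
  | succ j ih =>
    have h1 : s + (j+1 : ℕ) = (s + j) + 1 := by push_cast; ring
    rw [h1, Real.Gamma_add_one (by positivity), ih, ascPochhammer_succ_eval]
    ring

lemma asc_comp_eval (m : ℕ) (c : ℝ) (k : ℕ) :
    ((ascPochhammer ℝ m).comp (X + C c)).eval (k:ℝ) = (ascPochhammer ℝ m).eval (c + k) := by
  rw [eval_comp]; simp [add_comm]

lemma alt_sum_poch (n : ℕ) (m : ℕ) (hm : m ≤ n) (c : ℝ) :
    ∑ k ∈ range (n+1), (-1:ℝ)^k * (n.choose k : ℝ) * (ascPochhammer ℝ m).eval (c + k)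
      = if m = n then (-1:ℝ)^n * n.factorial else 0 := by
  set P : Polynomial ℝ := (ascPochhammer ℝ m).comp (X + C c) with hP
  have hdeg : P.natDegree = m := by
    rw [hP, natDegree_comp, ascPochhammer_natDegree, natDegree_X_add_C, mul_one]
  have hmon : P.Monic := (monic_ascPochhammer ℝ m).comp_X_add_C c
  have hev : ∀ k : ℕ, (ascPochhammer ℝ m).eval (c + k) = P.eval (k:ℝ) := by
    intro k; rw [asc_comp_eval]
  simp only [hev]
  rw [alt_sum_eval n P (hdeg ▸ hm)]
  by_cases h : m = n
  · subst h
    rw [← hdeg, hmon.coeff_natDegree]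
    simp
  · rw [Polynomial.coeff_eq_zero_of_natDegree_lt (hdeg ▸ lt_of_le_of_ne hm h)]
    simp [h]

lemma integrableOn_pow_rpow (α : ℝ) (hα : -1 < α) (m : ℕ) :
    IntegrableOn (fun x : ℝ => x^m * x^α * Real.exp (-x)) (Ioi 0) := by
  have h := Real.GammaIntegral_convergent (s := α + m + 1) (by have : (0:ℝ) ≤ m := Nat.cast_nonneg m; linarith)
  refine h.congr_fun (fun x hx => ?_) measurableSet_Ioi
  have hx' : (0:ℝ) < x := hx
  dsimp only
  rw [show α + (m:ℝ) + 1 - 1 = α + m by ring, Real.rpow_add hx', Real.rpow_natCast]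
  ring

lemma integral_pow_rpow (α : ℝ) (hα : -1 < α) (m : ℕ) :
    ∫ x in Ioi (0:ℝ), x^m * x^α * Real.exp (-x) = Real.Gamma (α + m + 1) := by
  rw [Real.Gamma_eq_integral (by have : (0:ℝ) ≤ m := Nat.cast_nonneg m; linarith)]
  refine setIntegral_congr_fun measurableSet_Ioi (fun x hx => ?_)
  have hx' : (0:ℝ) < x := hx
  rw [show α + (m:ℝ) + 1 - 1 = α + m by ring, Real.rpow_add hx', Real.rpow_natCast]
  ring

lemma integrableOn_poly_rpow (α : ℝ) (hα : -1 < α) (q : Polynomial ℝ) :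
    IntegrableOn (fun x : ℝ => q.eval x * x^α * Real.exp (-x)) (Ioi 0) := by
  have : (fun x : ℝ => q.eval x * x^α * Real.exp (-x))
      = fun x : ℝ => ∑ m ∈ range (q.natDegree + 1), q.coeff m * (x^m * x^α * Real.exp (-x)) := by
    funext x
    rw [q.eval_eq_sum_range, Finset.sum_mul, Finset.sum_mul]
    exact Finset.sum_congr rfl fun m _ => by ring
  rw [this]
  exact integrable_finset_sum _ fun m _ => ((integrableOn_pow_rpow α hα m).const_mul _)

lemma integral_poly_rpow (α : ℝ) (hα : -1 < α) (q : Polynomial ℝ) :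
    ∫ x in Ioi (0:ℝ), q.eval x * x^α * Real.exp (-x)
      = ∑ m ∈ range (q.natDegree + 1), q.coeff m * Real.Gamma (α + m + 1) := by
  have heq : ∀ x ∈ Ioi (0:ℝ), q.eval x * x^α * Real.exp (-x)
      = ∑ m ∈ range (q.natDegree + 1), q.coeff m * (x^m * x^α * Real.exp (-x)) := by
    intro x _
    rw [q.eval_eq_sum_range, Finset.sum_mul, Finset.sum_mul]
    exact Finset.sum_congr rfl fun m _ => by ring
  rw [setIntegral_congr_fun measurableSet_Ioi heq,
    integral_finset_sum _ fun m _ => ((integrableOn_pow_rpow α hα m).const_mul _)]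
  exact Finset.sum_congr rfl fun m _ => by
    rw [integral_const_mul, integral_pow_rpow α hα m]

lemma laguerre_moment (α : ℝ) (hα : -1 < α) (n m : ℕ) (hm : m ≤ n) :
    ∑ k ∈ range (n+1), lcoef α n k * Real.Gamma (α + k + m + 1)
      = if m = n then (-1:ℝ)^n * Real.Gamma (α + n + 1) else 0 := by
  have hterm : ∀ k ∈ range (n+1), lcoef α n k * Real.Gamma (α + k + m + 1)
      = Real.Gamma (α + n + 1) / n.factorial *
        ((-1:ℝ)^k * (n.choose k : ℝ) * (ascPochhammer ℝ m).eval ((α+1) + k)) := by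
    intro k hk
    have hkn : k ≤ n := Nat.lt_succ_iff.mp (Finset.mem_range.mp hk)
    have hs : (0:ℝ) < α + k + 1 := by have : (0:ℝ) ≤ k := Nat.cast_nonneg k; linarith
    have h1 : Real.Gamma (α + k + m + 1) = Real.Gamma (α + k + 1) * (ascPochhammer ℝ m).eval (α + k + 1) := by
      rw [← Gamma_ascPochhammer _ hs m]; ring_nf
    have h2 : Real.Gamma (α + k + 1) * (ascPochhammer ℝ (n-k)).eval (α + k + 1)
        = Real.Gamma (α + n + 1) := by
      rw [← Gamma_ascPochhammer _ hs (n-k)]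
      congr 1
      have : ((n - k : ℕ) : ℝ) = (n:ℝ) - k := by
        rw [Nat.cast_sub hkn]
      rw [this]; ring
    have h3 : ((n.choose k : ℕ) : ℝ) * ((n-k).factorial * k.factorial) = n.factorial := by
      rw [← Nat.choose_mul_factorial_mul_factorial hkn]
      push_cast; ring
    have hfac : ((n-k).factorial : ℝ) * k.factorial ≠ 0 := by positivity
    have hnfac : (n.factorial : ℝ) ≠ 0 := by positivity
    rw [lcoef, h1]
    have hch : ((α+1) + (k:ℝ)) = α + k + 1 := by ring
    rw [hch]
    field_simp
    rw [← h2, ← h3]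
    ring
  rw [Finset.sum_congr rfl hterm, ← Finset.mul_sum, alt_sum_poch n m hm (α+1)]
  by_cases h : m = n
  · simp only [h, if_true]
    have hnfac : (n.factorial : ℝ) ≠ 0 := by positivity
    field_simp
  · simp [h]

lemma laguerre_eval (α : ℝ) (n : ℕ) (x : ℝ) :
    (laguerre α n).eval x = ∑ k ∈ range (n+1), lcoef α n k * x^k := by
  rw [laguerre, eval_finset_sum]
  exact Finset.sum_congr rfl fun k _ => by simp [lcoef]

lemma laguerre_natDegree_le (α : ℝ) (n : ℕ) : (laguerre α n).natDegree ≤ n := by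
  rw [laguerre]
  refine Polynomial.natDegree_sum_le_of_forall_le _ _ fun k hk => ?_
  refine le_trans (Polynomial.natDegree_C_mul_le _ _) ?_
  simpa using Nat.lt_succ_iff.mp (Finset.mem_range.mp hk)

lemma laguerre_coeff_self (α : ℝ) (n : ℕ) :
    (laguerre α n).coeff n = (-1:ℝ)^n / n.factorial := by
  rw [laguerre, Polynomial.finset_sum_coeff]
  rw [Finset.sum_eq_single n]
  · simp [Polynomial.coeff_C_mul, Polynomial.coeff_X_pow]
  · intro k _ hkn
    simp [Polynomial.coeff_C_mul, Polynomial.coeff_X_pow, Ne.symm hkn]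
  · simp

lemma laguerre_orthog (α : ℝ) (hα : -1 < α) (n : ℕ) (q : Polynomial ℝ) (hq : q.natDegree ≤ n) :
    ∫ x in Ioi (0:ℝ), (laguerre α n).eval x * q.eval x * x^α * Real.exp (-x)
      = (-1:ℝ)^n * Real.Gamma (α + n + 1) * q.coeff n := by
  have hint : ∀ k : ℕ, IntegrableOn
      (fun x : ℝ => (X^k * q).eval x * x^α * Real.exp (-x)) (Ioi 0) :=
    fun k => integrableOn_poly_rpow α hα _
  have step1 : ∫ x in Ioi (0:ℝ), (laguerre α n).eval x * q.eval x * x^α * Real.exp (-x)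
      = ∑ k ∈ range (n+1), lcoef α n k *
          ∫ x in Ioi (0:ℝ), (X^k * q).eval x * x^α * Real.exp (-x) := by
    have : ∀ k ∈ range (n+1), lcoef α n k *
          ∫ x in Ioi (0:ℝ), (X^k * q).eval x * x^α * Real.exp (-x)
        = ∫ x in Ioi (0:ℝ), lcoef α n k * ((X^k * q).eval x * x^α * Real.exp (-x)) := by
      intro k _
      rw [integral_const_mul]
    rw [Finset.sum_congr rfl this,
      ← integral_finset_sum _ (fun k _ => ((hint k).const_mul _))]
    refine setIntegral_congr_fun measurableSet_Ioi (fun x _ => ?_)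
    rw [laguerre_eval, Finset.sum_mul, Finset.sum_mul, Finset.sum_mul]
    exact Finset.sum_congr rfl fun k _ => by simp only [eval_mul, eval_pow, eval_X]; ring
  have step2 : ∀ k : ℕ, ∫ x in Ioi (0:ℝ), (X^k * q).eval x * x^α * Real.exp (-x)
      = ∑ m ∈ range (q.natDegree + 1), q.coeff m * Real.Gamma (α + k + m + 1) := by
    intro k
    have hαk : -1 < α + k := by have : (0:ℝ) ≤ k := Nat.cast_nonneg k; linarith
    have hcg : ∀ x ∈ Ioi (0:ℝ), (X^k * q).eval x * x^α * Real.exp (-x)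
        = q.eval x * x^(α + k) * Real.exp (-x) := by
      intro x hx
      have hx' : (0:ℝ) < x := hx
      rw [Real.rpow_add hx', Real.rpow_natCast]
      simp only [eval_mul, eval_pow, eval_X]
      ring
    rw [setIntegral_congr_fun measurableSet_Ioi hcg, integral_poly_rpow _ hαk q]
  rw [step1]
  simp only [step2]
  simp only [Finset.mul_sum]
  rw [Finset.sum_comm]
  have inner : ∀ m ∈ range (q.natDegree + 1),
      ∑ k ∈ range (n+1), lcoef α n k * (q.coeff m * Real.Gamma (α + k + m + 1))
        = q.coeff m * (if m = n then (-1:ℝ)^n * Real.Gamma (α + n + 1) else 0) := by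
    intro m hm
    have hmn : m ≤ n := le_trans (Nat.lt_succ_iff.mp (Finset.mem_range.mp hm)) hq
    rw [← laguerre_moment α hα n m hmn, Finset.mul_sum]
    exact Finset.sum_congr rfl fun k _ => by ring
  rw [Finset.sum_congr rfl inner]
  by_cases hd : n < q.natDegree + 1
  · rw [Finset.sum_eq_single n (fun m _ hmn => by simp [hmn]) (fun h => absurd (Finset.mem_range.mpr hd) h)]
    simp [mul_comm]
  · have hn : q.natDegree < n := by omega
    have hz : ∀ m ∈ range (q.natDegree + 1),
        q.coeff m * (if m = n then (-1:ℝ)^n * Real.Gamma (α + n + 1) else 0) = 0 := by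
      intro m hm
      have : m ≠ n := by have := Finset.mem_range.mp hm; omega
      simp [this]
    rw [Finset.sum_eq_zero hz, Polynomial.coeff_eq_zero_of_natDegree_lt hn]
    ring

lemma laguerre_zero (α : ℝ) : laguerre α 0 = Polynomial.C 1 := by
  simp [laguerre]

lemma laguerre_expand (α : ℝ) : ∀ (n : ℕ) (p : Polynomial ℝ), p.natDegree ≤ n →
    ∃ c : ℕ → ℝ, p = ∑ k ∈ range (n+1), Polynomial.C (c k) * laguerre α k := by
  intro n
  induction n with
  | zero =>
    intro p hp
    refine ⟨fun _ => p.coeff 0, ?_⟩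
    rw [Finset.sum_range_one, laguerre_zero]
    rw [Polynomial.eq_C_of_natDegree_le_zero hp]
    simp
  | succ n ih =>
    intro p hp
    set a : ℝ := p.coeff (n+1) * ((-1:ℝ)^(n+1) * (n+1).factorial) with ha
    set q : Polynomial ℝ := p - Polynomial.C a * laguerre α (n+1) with hqdef
    have hqc : q.coeff (n+1) = 0 := by
      rw [hqdef]
      simp only [Polynomial.coeff_sub, Polynomial.coeff_C_mul, laguerre_coeff_self]
      rw [ha]
      have : ((n+1).factorial : ℝ) ≠ 0 := by positivity
      have h2 : ((-1:ℝ)^(n+1)) * ((-1:ℝ)^(n+1)) = 1 := by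
        rw [← pow_add]
        exact Even.neg_one_pow ⟨n+1, by ring⟩
      field_simp
      linear_combination (-(p.coeff (n+1))) * h2
    have hqd1 : q.natDegree ≤ n + 1 := by
      refine le_trans (Polynomial.natDegree_sub_le _ _) ?_
      simp only [max_le_iff]
      exact ⟨hp, le_trans (Polynomial.natDegree_C_mul_le _ _) (laguerre_natDegree_le α (n+1))⟩
    have hqd : q.natDegree ≤ n := by
      refine Polynomial.natDegree_le_iff_coeff_eq_zero.mpr fun m hm => ?_
      rcases Nat.lt_or_ge (n+1) m with h | h
      · exact Polynomial.coeff_eq_zero_of_natDegree_lt (lt_of_le_of_lt hqd1 h)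
      · have : m = n + 1 := le_antisymm h hm
        rw [this]; exact hqc
    obtain ⟨c, hc⟩ := ih q hqd
    refine ⟨fun k => if k = n+1 then a else c k, ?_⟩
    rw [Finset.sum_range_succ]
    have : ∑ k ∈ range (n+1), Polynomial.C (if k = n+1 then a else c k) * laguerre α k
        = ∑ k ∈ range (n+1), Polynomial.C (c k) * laguerre α k := by
      refine Finset.sum_congr rfl fun k hk => ?_
      have : k ≠ n+1 := by have := Finset.mem_range.mp hk; omega
      rw [if_neg this]
    rw [this, ← hc]
    simp only [if_true]
    rw [hqdef]
    abel

lemma integrableOn_two_poly (α : ℝ) (hα : -1 < α) (r s : Polynomial ℝ) :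
    IntegrableOn (fun x : ℝ => r.eval x * s.eval x * x^α * Real.exp (-x)) (Ioi 0) := by
  refine (integrableOn_poly_rpow α hα (r*s)).congr_fun (fun x _ => ?_) measurableSet_Ioi
  dsimp only
  rw [eval_mul]

lemma laguerre_orthonormal (α : ℝ) (hα : -1 < α) (k j : ℕ) :
    ∫ x in Ioi (0:ℝ), (laguerre α k).eval x * (laguerre α j).eval x * x^α * Real.exp (-x)
      = if j = k then Real.Gamma (α + k + 1) / k.factorial else 0 := by
  rcases le_or_gt j k with h | h
  · rw [laguerre_orthog α hα k (laguerre α j) (le_trans (laguerre_natDegree_le α j) h)]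
    by_cases hjk : j = k
    · subst hjk
      rw [laguerre_coeff_self, if_pos rfl]
      have h2 : ((-1:ℝ)^j) * ((-1:ℝ)^j) = 1 := by
        rw [← pow_add]; exact Even.neg_one_pow ⟨j, by ring⟩
      field_simp
      linear_combination Real.Gamma (α + j + 1) * h2
    · rw [Polynomial.coeff_eq_zero_of_natDegree_lt
        (lt_of_le_of_lt (laguerre_natDegree_le α j) (lt_of_le_of_ne h hjk))]
      simp [hjk]
  · have hcomm : ∀ x ∈ Ioi (0:ℝ), (laguerre α k).eval x * (laguerre α j).eval x * x^α * Real.exp (-x)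
        = (laguerre α j).eval x * (laguerre α k).eval x * x^α * Real.exp (-x) := by
      intro x _; ring
    rw [setIntegral_congr_fun measurableSet_Ioi hcomm,
      laguerre_orthog α hα j (laguerre α k) (le_trans (laguerre_natDegree_le α k) h.le),
      Polynomial.coeff_eq_zero_of_natDegree_lt (lt_of_le_of_lt (laguerre_natDegree_le α k) h)]
    have : j ≠ k := Nat.ne_of_gt h
    simp [this]

/-- The Laguerre kernel reproduces polynomials of degree at most `n`. -/
theorem laguerre_kernel_reproducing (α : ℝ) (hα : -1 < α) (n : ℕ)
    (p : Polynomial ℝ) (hp : p.degree ≤ n) (y : ℝ) :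
    ∫ x in Set.Ioi (0 : ℝ),
      laguerreKernel α n x y * p.eval x * x ^ α * Real.exp (-x) = p.eval y := by
  have hpn : p.natDegree ≤ n := Polynomial.natDegree_le_iff_degree_le.mpr hp
  obtain ⟨c, hc⟩ := laguerre_expand α n p hpn
  have hΓ : ∀ k : ℕ, (0:ℝ) < Real.Gamma (α + k + 1) := fun k =>
    Real.Gamma_pos_of_pos (by have : (0:ℝ) ≤ k := Nat.cast_nonneg k; linarith)
  -- ∫ L_k p
  have hLp : ∀ k ∈ range (n+1),
      ∫ x in Ioi (0:ℝ), (laguerre α k).eval x * p.eval x * x^α * Real.exp (-x)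
        = c k * (Real.Gamma (α + k + 1) / k.factorial) := by
    intro k hk
    have hsplit : ∀ x ∈ Ioi (0:ℝ), (laguerre α k).eval x * p.eval x * x^α * Real.exp (-x)
        = ∑ j ∈ range (n+1), c j *
            ((laguerre α k).eval x * (laguerre α j).eval x * x^α * Real.exp (-x)) := by
      intro x _
      rw [hc, eval_finset_sum]
      rw [Finset.mul_sum, Finset.sum_mul, Finset.sum_mul]
      exact Finset.sum_congr rfl fun j _ => by simp only [eval_mul, eval_C]; ring
    rw [setIntegral_congr_fun measurableSet_Ioi hsplit,
      integral_finset_sum _ (fun j _ => ((integrableOn_two_poly α hα (laguerre α k) (laguerre α j)).const_mul _))]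
    have : ∀ j ∈ range (n+1), c j * ∫ x in Ioi (0:ℝ),
        (laguerre α k).eval x * (laguerre α j).eval x * x^α * Real.exp (-x)
        = c j * (if j = k then Real.Gamma (α + k + 1) / k.factorial else 0) := by
      intro j _
      rw [laguerre_orthonormal α hα k j]
    simp only [integral_const_mul]
    rw [Finset.sum_congr rfl this, Finset.sum_eq_single k (fun j _ hjk => by simp [hjk]) (fun h => absurd hk h)]
    simp
  -- main computation
  have hker : ∀ x ∈ Ioi (0:ℝ), laguerreKernel α n x y * p.eval x * x^α * Real.exp (-x)
      = ∑ k ∈ range (n+1), ((k.factorial : ℝ) / Real.Gamma (α + k + 1) * (laguerre α k).eval y) *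
          ((laguerre α k).eval x * p.eval x * x^α * Real.exp (-x)) := by
    intro x _
    rw [laguerreKernel, Finset.sum_mul, Finset.sum_mul, Finset.sum_mul]
    exact Finset.sum_congr rfl fun k _ => by ring
  rw [setIntegral_congr_fun measurableSet_Ioi hker,
    integral_finset_sum _ (fun k _ => ((integrableOn_two_poly α hα (laguerre α k) p).const_mul _))]
  simp only [integral_const_mul]
  have : ∀ k ∈ range (n+1), (k.factorial : ℝ) / Real.Gamma (α + k + 1) * (laguerre α k).eval y *
      ∫ x in Ioi (0:ℝ), (laguerre α k).eval x * p.eval x * x^α * Real.exp (-x)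
      = c k * (laguerre α k).eval y := by
    intro k hk
    rw [hLp k hk]
    have h1 : Real.Gamma (α + k + 1) ≠ 0 := ne_of_gt (hΓ k)
    have h2 : (k.factorial : ℝ) ≠ 0 := by positivity
    field_simp
  rw [Finset.sum_congr rfl this]
  conv_rhs => rw [hc]
  rw [eval_finset_sum]
  exact Finset.sum_congr rfl fun k _ => by simp only [eval_mul, eval_C]
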